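/- arXiv:cs/0106035 — 7 statements merged into one kernel-verified Lean document; each statement's English description precedes it below -/
import Mathlib

section
/- If a relational algebra expression e has type τ under a type assignment T, and A is a set of attribute names containing all attribute names explicitly occurring in e, then e has type τ ∩ A under the restricted type assignment T|_A defined by T|_A(r) = T(r) ∩ A. -/
/-- Relational algebra expressions over relation variables of type `V`,
with attribute names modeled as natural numbers. -/
inductive RAExp (V : Type) where
  | rel : V → RAExp V
  | union : RAExp V → RAExp V → RAExp V
  | diff : RAExp V → RAExp V → RAExp V
  | join : RAExp V → RAExp V → RAExp V
  | prod : RAExp V → RAExp V → RAExp V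
  | select : List ℕ → RAExp V → RAExp V
  | proj : List ℕ → RAExp V → RAExp V
  | rename : ℕ → ℕ → RAExp V → RAExp V
  | projOut : ℕ → RAExp V → RAExp V

/-- The typing judgment `T ⊢ e : τ`. -/
inductive HasType {V : Type} (T : V → Finset ℕ) : RAExp V → Finset ℕ → Prop where
  | rel (r : V) : HasType T (.rel r) (T r)
  | union {e₁ e₂ τ} : HasType T e₁ τ → HasType T e₂ τ → HasType T (.union e₁ e₂) τ
  | diff {e₁ e₂ τ} : HasType T e₁ τ → HasType T e₂ τ → HasType T (.diff e₁ e₂) τ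
  | join {e₁ e₂ τ₁ τ₂} : HasType T e₁ τ₁ → HasType T e₂ τ₂ →
      HasType T (.join e₁ e₂) (τ₁ ∪ τ₂)
  | prod {e₁ e₂ τ₁ τ₂} : HasType T e₁ τ₁ → HasType T e₂ τ₂ → τ₁ ∩ τ₂ = ∅ →
      HasType T (.prod e₁ e₂) (τ₁ ∪ τ₂)
  | select {As e τ} : HasType T e τ → (∀ A ∈ As, A ∈ τ) → HasType T (.select As e) τ
  | proj {As e τ} : HasType T e τ → (∀ A ∈ As, A ∈ τ) →
      HasType T (.proj As e) As.toFinset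
  | rename {A B e τ} : HasType T e τ → A ∈ τ → B ∉ τ →
      HasType T (.rename A B e) (τ.erase A ∪ {B})
  | projOut {A e τ} : HasType T e τ → A ∈ τ → HasType T (.projOut A e) (τ.erase A)

/-- The attributes explicitly mentioned in an expression. -/
def specattrs {V : Type} : RAExp V → Finset ℕ
  | .rel _ => ∅
  | .union e₁ e₂ | .diff e₁ e₂ | .join e₁ e₂ | .prod e₁ e₂ =>
      specattrs e₁ ∪ specattrs e₂
  | .select As e | .proj As e => As.toFinset ∪ specattrs e
  | .rename A B e => {A, B} ∪ specattrs e
  | .projOut A e => {A} ∪ specattrs e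

open Classical in
/-- Restriction lemma: if `T ⊢ e : τ` and `A` contains all attributes exhibited
in `e`, then the restricted assignment `r ↦ T(r) ∩ A` types `e` with `τ ∩ A`. -/
theorem restriction_lemma {V : Type} (T : V → Finset ℕ) (e : RAExp V) (τ : Finset ℕ)
    (h : HasType T e τ) (A : Set ℕ) (hA : ↑(specattrs e) ⊆ A) :
    HasType (fun r => (T r).filter (· ∈ A)) e (τ.filter (· ∈ A)) := by

  induction h with
  | rel r => exact .rel r
  | union h1 h2 ih1 ih2 =>
      simp only [specattrs, Finset.coe_union, Set.union_subset_iff] at hA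
      exact .union (ih1 hA.1) (ih2 hA.2)
  | diff h1 h2 ih1 ih2 =>
      simp only [specattrs, Finset.coe_union, Set.union_subset_iff] at hA
      exact .diff (ih1 hA.1) (ih2 hA.2)
  | join h1 h2 ih1 ih2 =>
      simp only [specattrs, Finset.coe_union, Set.union_subset_iff] at hA
      rw [Finset.filter_union]
      exact .join (ih1 hA.1) (ih2 hA.2)
  | prod h1 h2 hdisj ih1 ih2 =>
      simp only [specattrs, Finset.coe_union, Set.union_subset_iff] at hA
      rw [Finset.filter_union]
      refine .prod (ih1 hA.1) (ih2 hA.2) ?_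
      rw [← Finset.filter_inter_distrib, hdisj, Finset.filter_empty]
  | @select As e τ h1 hmem ih =>
      simp only [specattrs, Finset.coe_union, Set.union_subset_iff] at hA
      refine .select (ih hA.2) ?_
      intro a ha
      simp only [Finset.mem_filter]
      exact ⟨hmem a ha, hA.1 (by simpa using List.mem_toFinset.mpr ha)⟩
  | @proj As e τ h1 hmem ih =>
      simp only [specattrs, Finset.coe_union, Set.union_subset_iff] at hA
      have : As.toFinset.filter (· ∈ A) = As.toFinset := by
        apply Finset.filter_true_of_mem
        intro a ha
        exact hA.1 (by simpa using ha)
      rw [this]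
      refine .proj (ih hA.2) ?_
      intro a ha
      simp only [Finset.mem_filter]
      exact ⟨hmem a ha, hA.1 (by simpa using List.mem_toFinset.mpr ha)⟩
  | @rename a b e τ h1 haτ hbτ ih =>
      simp only [specattrs, Finset.coe_union, Set.union_subset_iff] at hA
      have haA : a ∈ A := hA.1 (by simp)
      have hbA : b ∈ A := hA.1 (by simp)
      have heq : (τ.erase a ∪ {b}).filter (· ∈ A)
          = (τ.filter (· ∈ A)).erase a ∪ {b} := by
        rw [Finset.filter_union, Finset.filter_erase]
        congr 1
        · exact Finset.filter_singleton (· ∈ A) b ▸ by simp [hbA]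
      rw [heq]
      refine .rename (ih hA.2) ?_ ?_
      · exact Finset.mem_filter.mpr ⟨haτ, haA⟩
      · intro hb; exact hbτ (Finset.mem_filter.mp hb).1
  | @projOut a e τ h1 haτ ih =>
      simp only [specattrs, Finset.coe_union, Set.union_subset_iff] at hA
      have haA : a ∈ A := hA.1 (by simp)
      rw [Finset.filter_erase]
      exact .projOut (ih hA.2) (Finset.mem_filter.mpr ⟨haτ, haA⟩)
end

section
/- A relational algebra expression e is typable (there exists a type assignment under which e is well-typed) if and only if e is well-typed under some type assignment T satisfying T(r) ⊆ Specattrs(e) for every relation variable r occurring in e. -/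
/-- The relation variables occurring in an expression. -/
def relvars {V : Type} [DecidableEq V] : RAExp V → Finset V
  | .rel r => {r}
  | .union e₁ e₂ | .diff e₁ e₂ | .join e₁ e₂ | .prod e₁ e₂ =>
      relvars e₁ ∪ relvars e₂
  | .select _ e | .proj _ e | .rename _ _ e | .projOut _ e => relvars e


theorem hasType_restrict {V : Type} {T : V → Finset ℕ} {e : RAExp V} {τ : Finset ℕ}
    (h : HasType T e τ) (S : Finset ℕ) (hS : specattrs e ⊆ S) :
    HasType (fun r => T r ∩ S) e (τ ∩ S) := by
  induction h with
  | rel r => exact HasType.rel r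
  | union h1 h2 ih1 ih2 =>
      simp only [specattrs, Finset.union_subset_iff] at hS
      exact HasType.union (ih1 hS.1) (ih2 hS.2)
  | diff h1 h2 ih1 ih2 =>
      simp only [specattrs, Finset.union_subset_iff] at hS
      exact HasType.diff (ih1 hS.1) (ih2 hS.2)
  | join h1 h2 ih1 ih2 =>
      simp only [specattrs, Finset.union_subset_iff] at hS
      have := HasType.join (ih1 hS.1) (ih2 hS.2)
      rwa [← Finset.union_inter_distrib_right] at this
  | @prod _ _ t1 t2 h1 h2 hdisj ih1 ih2 =>
      simp only [specattrs, Finset.union_subset_iff] at hS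
      have hd : (t1 ∩ S) ∩ (t2 ∩ S) = ∅ := by
        rw [← Finset.subset_empty, ← hdisj]
        intro x hx; simp only [Finset.mem_inter] at *; tauto
      have := HasType.prod (ih1 hS.1) (ih2 hS.2) hd
      rwa [← Finset.union_inter_distrib_right] at this
  | select h hmem ih =>
      simp only [specattrs, Finset.union_subset_iff] at hS
      refine HasType.select (ih hS.2) ?_
      intro A hA
      exact Finset.mem_inter.2 ⟨hmem A hA, hS.1 (List.mem_toFinset.2 hA)⟩
  | @proj As e' τ' h hmem ih =>
      simp only [specattrs, Finset.union_subset_iff] at hS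
      have : HasType (fun r => T r ∩ S) (RAExp.proj As e') As.toFinset :=
        HasType.proj (ih hS.2) (fun A hA =>
          Finset.mem_inter.2 ⟨hmem A hA, hS.1 (List.mem_toFinset.2 hA)⟩)
      rwa [Finset.inter_eq_left.2 hS.1]
  | @rename A B e' τ' h hA hB ih =>
      simp only [specattrs, Finset.union_subset_iff, Finset.insert_subset_iff,
        Finset.singleton_subset_iff] at hS
      obtain ⟨⟨hAS, hBS⟩, hS2⟩ := hS
      have := HasType.rename (A := A) (B := B) (ih hS2)
        (Finset.mem_inter.2 ⟨hA, hAS⟩) (fun hc => hB (Finset.mem_inter.1 hc).1)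
      have heq : (τ' ∩ S).erase A ∪ {B} = (τ'.erase A ∪ {B}) ∩ S := by
        ext x
        simp only [Finset.mem_union, Finset.mem_erase, Finset.mem_inter,
          Finset.mem_singleton]
        constructor
        · rintro (⟨hx, hxτ, hxS⟩ | rfl)
          · exact ⟨Or.inl ⟨hx, hxτ⟩, hxS⟩
          · exact ⟨Or.inr rfl, hBS⟩
        · rintro ⟨⟨hx, hxτ⟩ | rfl, hxS⟩
          · exact Or.inl ⟨hx, hxτ, hxS⟩
          · exact Or.inr rfl
      rwa [heq] at this
  | @projOut A e' τ' h hA ih =>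
      simp only [specattrs, Finset.union_subset_iff,
        Finset.singleton_subset_iff] at hS
      obtain ⟨hAS, hS2⟩ := hS
      have := HasType.projOut (A := A) (ih hS2) (Finset.mem_inter.2 ⟨hA, hAS⟩)
      have heq : (τ' ∩ S).erase A = τ'.erase A ∩ S := by
        ext x
        simp only [Finset.mem_erase, Finset.mem_inter]
        tauto
      rwa [heq] at this

/-- An expression is typable iff it is well-typed under a type assignment whose
types use only attributes explicitly occurring in the expression. -/
theorem typable_iff_small_assignment {V : Type} [DecidableEq V] (e : RAExp V) :
    (∃ (T : V → Finset ℕ) (τ : Finset ℕ), HasType T e τ) ↔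
    (∃ (T : V → Finset ℕ) (τ : Finset ℕ),
      (∀ r ∈ relvars e, T r ⊆ specattrs e) ∧ HasType T e τ) := by
  constructor
  · rintro ⟨T, τ, h⟩
    exact ⟨fun r => T r ∩ specattrs e, τ ∩ specattrs e,
      fun r _ => Finset.inter_subset_right,
      hasType_restrict h (specattrs e) (Finset.Subset.refl _)⟩
  · rintro ⟨T, τ, _, h⟩
    exact ⟨T, τ, h⟩
end

section
/- Every system of set equations has a symbolic solution. Concretely: let L and R be disjoint finite sets of variables, and let Σ be a finite set of equations, each consisting of a pair (S, T) with S ⊆ L and T ⊆ R, interpreted over proper substitutions. Then there exists a finite set V of variables and a mapping g from L ∪ R to subsets of V such that: (1) for every proper substitution h on V (assigning pairwise disjoint subsets of a fixed universe U to the elements of V), the pair of induced substitutions h_L on L and h_R on R (where h_L(a) = ⋃{h(c) : c ∈ g(a)} and analogously for h_R), each of which is proper, is a solution of Σ; and (2) every solution (f_L, f_R) of Σ (i.e., pair of proper substitutions with ⋃_{a∈S} f_L(a) = ⋃_{b∈T} f_R(b) for every equation (S,T) ∈ Σ) arises as (h_L, h_R) for some proper substitution h on V. -/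
/-- A substitution is proper on a finite set of variables if distinct variables
receive disjoint sets. -/
def ProperOn {α U : Type} (S : Finset α) (f : α → Set U) : Prop :=
  ∀ x ∈ S, ∀ y ∈ S, x ≠ y → Disjoint (f x) (f y)

/-- Every system of set equations has a symbolic solution. -/
theorem symbolic_solution_exists {α U : Type} (L R : Finset α) (hLR : Disjoint L R)
    (Eqs : Finset (Finset α × Finset α)) (hEqs : ∀ p ∈ Eqs, p.1 ⊆ L ∧ p.2 ⊆ R) :
    ∃ (n : ℕ) (g : α → Finset (Fin n)),
      (∀ h : Fin n → Set U, (∀ c d : Fin n, c ≠ d → Disjoint (h c) (h d)) →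
        ProperOn L (fun a => ⋃ c ∈ g a, h c) ∧
        ProperOn R (fun b => ⋃ c ∈ g b, h c) ∧
        ∀ p ∈ Eqs, (⋃ a ∈ p.1, ⋃ c ∈ g a, h c) = (⋃ b ∈ p.2, ⋃ c ∈ g b, h c)) ∧
      (∀ fL fR : α → Set U, ProperOn L fL → ProperOn R fR →
        (∀ p ∈ Eqs, (⋃ a ∈ p.1, fL a) = (⋃ b ∈ p.2, fR b)) →
        ∃ h : Fin n → Set U, (∀ c d : Fin n, c ≠ d → Disjoint (h c) (h d)) ∧
          (∀ a ∈ L, fL a = ⋃ c ∈ g a, h c) ∧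
          (∀ b ∈ R, fR b = ⋃ c ∈ g b, h c)) := by
  classical
  let Adm : Option α × Option α → Prop := fun p =>
    ∀ q ∈ Eqs, ((∃ a ∈ q.1, p.1 = some a) ↔ (∃ b ∈ q.2, p.2 = some b))
  let T : Finset (Option α × Option α) :=
    ((L.image some ∪ {none}) ×ˢ (R.image some ∪ {none})).filter
      (fun p => p ≠ (none, none) ∧ Adm p)
  let e : Fin T.card ≃ {x // x ∈ T} := T.equivFin.symm
  let t : Fin T.card → Option α × Option α := fun i => (e i : Option α × Option α)
  have htT : ∀ i, t i ∈ T := fun i => (e i).2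
  have htinj : Function.Injective t := fun i j hij => e.injective (Subtype.ext hij)
  have hTmem : ∀ p ∈ T, ((∃ a ∈ L, p.1 = some a) ∨ p.1 = none) ∧
      ((∃ b ∈ R, p.2 = some b) ∨ p.2 = none) ∧ p ≠ (none, none) ∧ Adm p := by
    intro p hp
    simp only [T, Finset.mem_filter, Finset.mem_product, Finset.mem_union,
      Finset.mem_image, Finset.mem_singleton] at hp
    obtain ⟨⟨h1, h2⟩, h3, h4⟩ := hp
    refine ⟨?_, ?_, h3, h4⟩
    · rcases h1 with ⟨a, ha, haa⟩ | h1
      · exact Or.inl ⟨a, ha, haa.symm⟩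
      · exact Or.inr h1
    · rcases h2 with ⟨b, hb, hbb⟩ | h2
      · exact Or.inl ⟨b, hb, hbb.symm⟩
      · exact Or.inr h2
  let g : α → Finset (Fin T.card) := fun a =>
    Finset.univ.filter (fun i => (t i).1 = some a ∨ (t i).2 = some a)
  have hgL : ∀ a ∈ L, ∀ i, i ∈ g a ↔ (t i).1 = some a := by
    intro a ha i
    simp only [g, Finset.mem_filter, Finset.mem_univ, true_and]
    constructor
    · rintro (h1 | h2)
      · exact h1
      · exfalso
        obtain ⟨-, h2', -, -⟩ := hTmem (t i) (htT i)
        rcases h2' with ⟨b, hb, hbb⟩ | hnone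
        · rw [hbb] at h2
          obtain rfl : b = a := Option.some.inj h2
          exact Finset.disjoint_left.mp hLR ha hb
        · rw [hnone] at h2; exact (Option.some_ne_none _ h2.symm).elim
    · exact Or.inl
  have hgR : ∀ b ∈ R, ∀ i, i ∈ g b ↔ (t i).2 = some b := by
    intro b hb i
    simp only [g, Finset.mem_filter, Finset.mem_univ, true_and]
    constructor
    · rintro (h1 | h2)
      · exfalso
        obtain ⟨h1', -, -, -⟩ := hTmem (t i) (htT i)
        rcases h1' with ⟨a, ha, haa⟩ | hnone
        · rw [haa] at h1
          obtain rfl : a = b := Option.some.inj h1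
          exact Finset.disjoint_left.mp hLR ha hb
        · rw [hnone] at h1; exact (Option.some_ne_none _ h1.symm).elim
      · exact h2
    · exact Or.inr
  refine ⟨T.card, g, ?_, ?_⟩
  · intro h hh
    refine ⟨?_, ?_, ?_⟩
    · intro a ha a' ha' hne
      simp only [Set.disjoint_iUnion_left, Set.disjoint_iUnion_right]
      intro i hi j hj
      refine hh j i fun hij => ?_
      have h1 : (t j).1 = some a := (hgL a ha j).mp hj
      have h2 : (t i).1 = some a' := (hgL a' ha' i).mp hi
      rw [hij, h2] at h1
      exact hne (Option.some.inj h1).symm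
    · intro b hb b' hb' hne
      simp only [Set.disjoint_iUnion_left, Set.disjoint_iUnion_right]
      intro i hi j hj
      refine hh j i fun hij => ?_
      have h1 : (t j).2 = some b := (hgR b hb j).mp hj
      have h2 : (t i).2 = some b' := (hgR b' hb' i).mp hi
      rw [hij, h2] at h1
      exact hne (Option.some.inj h1).symm
    · intro p hp
      obtain ⟨hpL, hpR⟩ := hEqs p hp
      ext u
      simp only [Set.mem_iUnion]
      constructor
      · rintro ⟨a, haS, i, hig, hu⟩
        have h1 : (t i).1 = some a := (hgL a (hpL haS) i).mp hig
        have hadm := (hTmem (t i) (htT i)).2.2.2 p hp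
        obtain ⟨b, hbT, h2⟩ := hadm.mp ⟨a, haS, h1⟩
        exact ⟨b, hbT, i, (hgR b (hpR hbT) i).mpr h2, hu⟩
      · rintro ⟨b, hbT, i, hig, hu⟩
        have h1 : (t i).2 = some b := (hgR b (hpR hbT) i).mp hig
        have hadm := (hTmem (t i) (htT i)).2.2.2 p hp
        obtain ⟨a, haS, h2⟩ := hadm.mpr ⟨b, hbT, h1⟩
        exact ⟨a, haS, i, (hgL a (hpL haS) i).mpr h2, hu⟩
  · intro fL fR hfL hfR hsol
    let F : Option α × Option α → Set U := fun p =>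
      (p.1.elim (Set.univ \ ⋃ a ∈ L, fL a) fL) ∩ (p.2.elim (Set.univ \ ⋃ b ∈ R, fR b) fR)
    have hfst : ∀ p ∈ T, ∀ q ∈ T, ∀ u : U, u ∈ F p → u ∈ F q → p.1 = q.1 := by
      intro p hp q hq u hup huq
      obtain ⟨hp1, -, -, -⟩ := hTmem p hp
      obtain ⟨hq1, -, -, -⟩ := hTmem q hq
      have hup1 := hup.1
      have huq1 := huq.1
      rcases hp1 with ⟨a, ha, hpa⟩ | hpa <;> rcases hq1 with ⟨a', ha', hqa⟩ | hqa <;>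
          rw [hpa] at hup1 ⊢ <;> rw [hqa] at huq1 ⊢ <;>
          simp only [Option.elim] at hup1 huq1
      · by_contra hne
        have hane : a ≠ a' := fun hh => hne (by rw [hh])
        exact Set.disjoint_left.mp (hfL a ha a' ha' hane) hup1 huq1
      · exact absurd (Set.mem_biUnion ha hup1) huq1.2
      · exact absurd (Set.mem_biUnion ha' huq1) hup1.2
    have hsnd : ∀ p ∈ T, ∀ q ∈ T, ∀ u : U, u ∈ F p → u ∈ F q → p.2 = q.2 := by
      intro p hp q hq u hup huq
      obtain ⟨-, hp2, -, -⟩ := hTmem p hp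
      obtain ⟨-, hq2, -, -⟩ := hTmem q hq
      have hup2 := hup.2
      have huq2 := huq.2
      rcases hp2 with ⟨b, hb, hpb⟩ | hpb <;> rcases hq2 with ⟨b', hb', hqb⟩ | hqb <;>
          rw [hpb] at hup2 ⊢ <;> rw [hqb] at huq2 ⊢ <;>
          simp only [Option.elim] at hup2 huq2
      · by_contra hne
        have hbne : b ≠ b' := fun hh => hne (by rw [hh])
        exact Set.disjoint_left.mp (hfR b hb b' hb' hbne) hup2 huq2
      · exact absurd (Set.mem_biUnion hb hup2) huq2.2
      · exact absurd (Set.mem_biUnion hb' huq2) hup2.2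
    refine ⟨fun i => F (t i), ?_, ?_, ?_⟩
    · intro i j hij
      rw [Set.disjoint_left]
      intro u hui huj
      exact hij (htinj (Prod.ext (hfst _ (htT i) _ (htT j) u hui huj)
        (hsnd _ (htT i) _ (htT j) u hui huj)))
    · intro a ha
      ext u
      simp only [Set.mem_iUnion]
      constructor
      · intro hu
        by_cases hb : ∃ b ∈ R, u ∈ fR b
        · obtain ⟨b, hbR, hub⟩ := hb
          have hpT : ((some a, some b) : Option α × Option α) ∈ T := by
            simp only [T, Finset.mem_filter, Finset.mem_product, Finset.mem_union,
              Finset.mem_image, Finset.mem_singleton]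
            refine ⟨⟨Or.inl ⟨a, ha, rfl⟩, Or.inl ⟨b, hbR, rfl⟩⟩, by simp, ?_⟩
            intro q hq
            obtain ⟨hq1, hq2⟩ := hEqs q hq
            constructor
            · rintro ⟨a', ha', haa⟩
              obtain rfl : a = a' := Option.some.inj haa
              have hu2 : u ∈ ⋃ b' ∈ q.2, fR b' := by
                rw [← hsol q hq]; exact Set.mem_biUnion ha' hu
              obtain ⟨b', hb', hub'⟩ := Set.mem_iUnion₂.mp hu2
              obtain rfl : b = b' := by
                by_contra hne
                exact Set.disjoint_left.mp (hfR b hbR b' (hq2 hb') hne) hub hub'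
              exact ⟨b, hb', rfl⟩
            · rintro ⟨b', hb', hbb⟩
              obtain rfl : b = b' := Option.some.inj hbb
              have hu1 : u ∈ ⋃ a' ∈ q.1, fL a' := by
                rw [hsol q hq]; exact Set.mem_biUnion hb' hub
              obtain ⟨a', ha', hua'⟩ := Set.mem_iUnion₂.mp hu1
              obtain rfl : a = a' := by
                by_contra hne
                exact Set.disjoint_left.mp (hfL a ha a' (hq1 ha') hne) hu hua'
              exact ⟨a, ha', rfl⟩
          refine ⟨e.symm ⟨_, hpT⟩, ?_, ?_⟩
          · rw [hgL a ha]
            show ((e (e.symm ⟨_, hpT⟩) : Option α × Option α)).1 = some a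
            rw [e.apply_symm_apply]
          · show u ∈ F (t (e.symm ⟨_, hpT⟩))
            have : t (e.symm ⟨_, hpT⟩) = (some a, some b) := by
              show ((e (e.symm ⟨_, hpT⟩) : Option α × Option α)) = _
              rw [e.apply_symm_apply]
            rw [this]
            exact ⟨hu, hub⟩
        · have hpT : ((some a, none) : Option α × Option α) ∈ T := by
            simp only [T, Finset.mem_filter, Finset.mem_product, Finset.mem_union,
              Finset.mem_image, Finset.mem_singleton]
            refine ⟨⟨Or.inl ⟨a, ha, rfl⟩, Or.inr trivial⟩, by simp, ?_⟩
            intro q hq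
            obtain ⟨hq1, hq2⟩ := hEqs q hq
            constructor
            · rintro ⟨a', ha', haa⟩
              obtain rfl : a = a' := Option.some.inj haa
              have hu2 : u ∈ ⋃ b' ∈ q.2, fR b' := by
                rw [← hsol q hq]; exact Set.mem_biUnion ha' hu
              obtain ⟨b', hb', hub'⟩ := Set.mem_iUnion₂.mp hu2
              exact absurd ⟨b', hq2 hb', hub'⟩ hb
            · rintro ⟨b', -, hbb⟩
              exact (Option.some_ne_none _ hbb.symm).elim
          refine ⟨e.symm ⟨_, hpT⟩, ?_, ?_⟩
          · rw [hgL a ha]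
            show ((e (e.symm ⟨_, hpT⟩) : Option α × Option α)).1 = some a
            rw [e.apply_symm_apply]
          · show u ∈ F (t (e.symm ⟨_, hpT⟩))
            have : t (e.symm ⟨_, hpT⟩) = (some a, none) := by
              show ((e (e.symm ⟨_, hpT⟩) : Option α × Option α)) = _
              rw [e.apply_symm_apply]
            rw [this]
            refine ⟨hu, Set.mem_univ u, fun hmem => ?_⟩
            obtain ⟨b', hb', hub'⟩ := Set.mem_iUnion₂.mp hmem
            exact hb ⟨b', hb', hub'⟩
      · rintro ⟨i, hig, hu⟩
        have h1 : (t i).1 = some a := (hgL a ha i).mp hig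
        have := hu.1
        rw [h1] at this
        exact this
    · intro b hb
      ext u
      simp only [Set.mem_iUnion]
      constructor
      · intro hu
        by_cases ha : ∃ a ∈ L, u ∈ fL a
        · obtain ⟨a, haL, hua⟩ := ha
          have hpT : ((some a, some b) : Option α × Option α) ∈ T := by
            simp only [T, Finset.mem_filter, Finset.mem_product, Finset.mem_union,
              Finset.mem_image, Finset.mem_singleton]
            refine ⟨⟨Or.inl ⟨a, haL, rfl⟩, Or.inl ⟨b, hb, rfl⟩⟩, by simp, ?_⟩
            intro q hq
            obtain ⟨hq1, hq2⟩ := hEqs q hq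
            constructor
            · rintro ⟨a', ha', haa⟩
              obtain rfl : a = a' := Option.some.inj haa
              have hu2 : u ∈ ⋃ b' ∈ q.2, fR b' := by
                rw [← hsol q hq]; exact Set.mem_biUnion ha' hua
              obtain ⟨b', hb', hub'⟩ := Set.mem_iUnion₂.mp hu2
              obtain rfl : b = b' := by
                by_contra hne
                exact Set.disjoint_left.mp (hfR b hb b' (hq2 hb') hne) hu hub'
              exact ⟨b, hb', rfl⟩
            · rintro ⟨b', hb', hbb⟩
              obtain rfl : b = b' := Option.some.inj hbb
              have hu1 : u ∈ ⋃ a' ∈ q.1, fL a' := by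
                rw [hsol q hq]; exact Set.mem_biUnion hb' hu
              obtain ⟨a', ha', hua'⟩ := Set.mem_iUnion₂.mp hu1
              obtain rfl : a = a' := by
                by_contra hne
                exact Set.disjoint_left.mp (hfL a haL a' (hq1 ha') hne) hua hua'
              exact ⟨a, ha', rfl⟩
          refine ⟨e.symm ⟨_, hpT⟩, ?_, ?_⟩
          · rw [hgR b hb]
            show ((e (e.symm ⟨_, hpT⟩) : Option α × Option α)).2 = some b
            rw [e.apply_symm_apply]
          · show u ∈ F (t (e.symm ⟨_, hpT⟩))
            have : t (e.symm ⟨_, hpT⟩) = (some a, some b) := by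
              show ((e (e.symm ⟨_, hpT⟩) : Option α × Option α)) = _
              rw [e.apply_symm_apply]
            rw [this]
            exact ⟨hua, hu⟩
        · have hpT : ((none, some b) : Option α × Option α) ∈ T := by
            simp only [T, Finset.mem_filter, Finset.mem_product, Finset.mem_union,
              Finset.mem_image, Finset.mem_singleton]
            refine ⟨⟨Or.inr trivial, Or.inl ⟨b, hb, rfl⟩⟩, by simp, ?_⟩
            intro q hq
            obtain ⟨hq1, hq2⟩ := hEqs q hq
            constructor
            · rintro ⟨a', -, haa⟩
              exact (Option.some_ne_none _ haa.symm).elim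
            · rintro ⟨b', hb', hbb⟩
              obtain rfl : b = b' := Option.some.inj hbb
              have hu1 : u ∈ ⋃ a' ∈ q.1, fL a' := by
                rw [hsol q hq]; exact Set.mem_biUnion hb' hu
              obtain ⟨a', ha', hua'⟩ := Set.mem_iUnion₂.mp hu1
              exact absurd ⟨a', hq1 ha', hua'⟩ ha
          refine ⟨e.symm ⟨_, hpT⟩, ?_, ?_⟩
          · rw [hgR b hb]
            show ((e (e.symm ⟨_, hpT⟩) : Option α × Option α)).2 = some b
            rw [e.apply_symm_apply]
          · show u ∈ F (t (e.symm ⟨_, hpT⟩))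
            have : t (e.symm ⟨_, hpT⟩) = (none, some b) := by
              show ((e (e.symm ⟨_, hpT⟩) : Option α × Option α)) = _
              rw [e.apply_symm_apply]
            rw [this]
            refine ⟨⟨Set.mem_univ u, fun hmem => ?_⟩, hu⟩
            obtain ⟨a', ha', hua'⟩ := Set.mem_iUnion₂.mp hmem
            exact ha ⟨a', ha', hua'⟩
      · rintro ⟨i, hig, hu⟩
        have h1 : (t i).2 = some b := (hgR b hb i).mp hig
        have := hu.2
        rw [h1] at this
        exact this
end

section
/- For the symbolic-solution construction: let L, R be disjoint finite sets, V = {ā : a ∈ L} ∪ {b̄ : b ∈ R} ∪ {(ā,b̄) : (a,b) ∈ L×R}, with g(a) = {(ā,b̄) : b ∈ R} ∪ {ā} for a ∈ L and g(b) = {(ā,b̄) : a ∈ L} ∪ {b̄} for b ∈ R. Given a solution (f_L, f_R) of the system Σ, define h on V by h(ā) = f_L(a) − ⋃_{b∈R} f_R(b), h(b̄) = f_R(b) − ⋃_{a∈L} f_L(a), and h(ā,b̄) = f_L(a) ∩ f_R(b). Then h is a proper substitution on V, and for each a ∈ L: f_L(a) = ⋃{h(c) : c ∈ g(a)}, and for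 each b ∈ R: f_R(b) = ⋃{h(c) : c ∈ g(b)}. -/
/-- In the symbolic-solution construction, the substitution `h` built from a
solution `(fL, fR)` is proper, and reconstructs `fL` and `fR`. -/
theorem symbolic_solution_construction {α U : Type} (L R : Finset α)
    (hLR : Disjoint L R) (Eqs : Finset (Finset α × Finset α))
    (hEqs : ∀ p ∈ Eqs, p.1 ⊆ L ∧ p.2 ⊆ R)
    (fL fR : α → Set U) (hfL : ProperOn L fL) (hfR : ProperOn R fR)
    (hsol : ∀ p ∈ Eqs, (⋃ a ∈ p.1, fL a) = (⋃ b ∈ p.2, fR b))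
    (h : α ⊕ α ⊕ α × α → Set U)
    (hbarL : ∀ a, h (.inl a) = fL a \ ⋃ b ∈ R, fR b)
    (hbarR : ∀ b, h (.inr (.inl b)) = fR b \ ⋃ a ∈ L, fL a)
    (hpair : ∀ a b, h (.inr (.inr (a, b))) = fL a ∩ fR b)
    (Vok : α ⊕ α ⊕ α × α → Prop)
    (hVok : ∀ v, Vok v ↔ (∃ a ∈ L, v = .inl a) ∨ (∃ b ∈ R, v = .inr (.inl b)) ∨
      (∃ a ∈ L, ∃ b ∈ R, v = .inr (.inr (a, b)))) :
    (∀ v w, Vok v → Vok w → v ≠ w → Disjoint (h v) (h w)) ∧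
    (∀ a ∈ L, fL a = (⋃ b ∈ R, h (.inr (.inr (a, b)))) ∪ h (.inl a)) ∧
    (∀ b ∈ R, fR b = (⋃ a ∈ L, h (.inr (.inr (a, b)))) ∪ h (.inr (.inl b))) := by
  refine ⟨?_, ?_, ?_⟩
  · intro v w hv hw hne
    rw [hVok] at hv hw
    rw [Set.disjoint_left]
    intro x hxv hxw
    obtain ⟨a, ha, rfl⟩ | ⟨b, hb, rfl⟩ | ⟨a, ha, b, hb, rfl⟩ := hv <;>
      obtain ⟨a', ha', rfl⟩ | ⟨b', hb', rfl⟩ | ⟨a', ha', b', hb', rfl⟩ := hw <;>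
      simp only [hbarL, hbarR, hpair, Set.mem_diff, Set.mem_inter_iff, Set.mem_iUnion,
        exists_prop, not_exists, not_and] at hxv hxw
    · have hab : a ≠ a' := by rintro rfl; exact hne rfl
      exact Set.disjoint_left.mp (hfL a ha a' ha' hab) hxv.1 hxw.1
    · exact hxv.2 b' hb' hxw.1
    · exact hxv.2 b' hb' hxw.2
    · exact hxw.2 b hb hxv.1
    · have hbb : b ≠ b' := by rintro rfl; exact hne rfl
      exact Set.disjoint_left.mp (hfR b hb b' hb' hbb) hxv.1 hxw.1
    · exact hxv.2 a' ha' hxw.1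
    · exact hxw.2 b hb hxv.2
    · exact hxw.2 a ha hxv.1
    · have : a ≠ a' ∨ b ≠ b' := by
        by_contra hc
        push_neg at hc
        exact hne (by rw [hc.1, hc.2])
      rcases this with hab | hbb
      · exact Set.disjoint_left.mp (hfL a ha a' ha' hab) hxv.1 hxw.1
      · exact Set.disjoint_left.mp (hfR b hb b' hb' hbb) hxv.2 hxw.2
  · intro a ha
    ext x
    simp only [hbarL, hpair, Set.mem_union, Set.mem_diff, Set.mem_inter_iff, Set.mem_iUnion]
    constructor
    · intro hx
      by_cases hc : ∃ b, ∃ _ : b ∈ R, x ∈ fR b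
      · obtain ⟨b, hb, hxb⟩ := hc
        exact Or.inl ⟨b, hb, hx, hxb⟩
      · exact Or.inr ⟨hx, by simpa using hc⟩
    · rintro (⟨b, hb, hx, -⟩ | ⟨hx, -⟩) <;> exact hx
  · intro b hb
    ext x
    simp only [hbarR, hpair, Set.mem_union, Set.mem_diff, Set.mem_inter_iff, Set.mem_iUnion]
    constructor
    · intro hx
      by_cases hc : ∃ a, ∃ _ : a ∈ L, x ∈ fL a
      · obtain ⟨a, ha, hxa⟩ := hc
        exact Or.inl ⟨a, ha, hxa, hx⟩
      · exact Or.inr ⟨hx, by simpa using hc⟩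
    · rintro (⟨a, ha, -, hx⟩ | ⟨hx, -⟩) <;> exact hx
end

section
/- Let Σ be a system of set equations with left variables L, right variables R, and let g' be the symbolic valuation defined by g'(x) = g(x) − V₀ (where g and V₀ are as in the construction: V consists of singletons ā, b̄ and pairs (ā,b̄); V₀ contains exactly those elements of V that, for some equation (S,T), belong to ⋃_{a∈S} g(a) but not ⋃_{b∈T} g(b), or vice versa). Then for every proper substitution h on V − V₀ and every equation (S, T) ∈ Σ: ⋃_{a∈S} ⋃_{c ∈ g'(a)} h(c) = ⋃_{b∈T} ⋃_{c ∈ g'(b)} h(c); that is, the induced valuation (h_L, h_R) satisfies every equation of Σ. -/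
/-- The induced valuation of the reduced symbolic valuation `g' = g − V₀`
satisfies every equation of the system. -/
theorem reduced_symbolic_valuation_solves {α U : Type} (L R : Finset α)
    (hLR : Disjoint L R) (Eqs : Finset (Finset α × Finset α))
    (hEqs : ∀ p ∈ Eqs, p.1 ⊆ L ∧ p.2 ⊆ R)
    -- the symbolic valuation g on L ∪ R, with values in V = L̄ ⊎ R̄ ⊎ (L×R)
    (gL gR : α → Set (α ⊕ α ⊕ α × α))
    (hgL : ∀ a, gL a = {Sum.inl a} ∪ {v | ∃ b ∈ R, v = .inr (.inr (a, b))})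
    (hgR : ∀ b, gR b = {Sum.inr (.inl b)} ∪ {v | ∃ a ∈ L, v = .inr (.inr (a, b))})
    -- the excluded set V₀: symmetric difference over some equation
    (V₀ : Set (α ⊕ α ⊕ α × α))
    (hV₀ : ∀ c, c ∈ V₀ ↔ ∃ p ∈ Eqs,
      ¬ ((c ∈ ⋃ a ∈ p.1, gL a) ↔ (c ∈ ⋃ b ∈ p.2, gR b)))
    -- a proper substitution on V − V₀
    (h : (α ⊕ α ⊕ α × α) → Set U)
    (hproper : ∀ v w, v ∉ V₀ → w ∉ V₀ → v ≠ w → Disjoint (h v) (h w)) :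
    ∀ p ∈ Eqs, (⋃ a ∈ p.1, ⋃ c ∈ gL a \ V₀, h c)
             = (⋃ b ∈ p.2, ⋃ c ∈ gR b \ V₀, h c) := by
  intro p hp
  have key : (⋃ a ∈ p.1, gL a) \ V₀ = (⋃ b ∈ p.2, gR b) \ V₀ := by
    ext c
    simp only [Set.mem_diff]
    constructor
    · rintro ⟨hc, hcV⟩
      refine ⟨?_, hcV⟩
      by_contra hnot
      exact hcV ((hV₀ c).2 ⟨p, hp, fun hiff => hnot (hiff.1 hc)⟩)
    · rintro ⟨hc, hcV⟩
      refine ⟨?_, hcV⟩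
      by_contra hnot
      exact hcV ((hV₀ c).2 ⟨p, hp, fun hiff => hnot (hiff.2 hc)⟩)
  have eq1 : (⋃ a ∈ p.1, ⋃ c ∈ gL a \ V₀, h c)
      = ⋃ c ∈ (⋃ a ∈ p.1, gL a) \ V₀, h c := by
    ext u
    simp only [Set.mem_iUnion, Set.mem_diff]
    tauto
  have eq2 : (⋃ b ∈ p.2, ⋃ c ∈ gR b \ V₀, h c)
      = ⋃ c ∈ (⋃ b ∈ p.2, gR b) \ V₀, h c := by
    ext u
    simp only [Set.mem_iUnion, Set.mem_diff]
    tauto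
  rw [eq1, eq2, key]
end

section
/- Extension of a type formula with an extra special attribute A preserves images in the following sense: let Γ be a type context with A ∉ Specattrs(Γ), let Γ' be Γ extended with A (adding A to Specattrs with constraint(A) = (⋁_r r) → ⋁_{a ∈ Typevars} (⋀_{a ∈ decl(r)} r ∧ ⋀_{a ∉ decl(r)} ¬r)). Then for every instantiation 𝓘 of Γ there is an instantiation 𝓘' of Γ' with 𝓘(Γ) = 𝓘'(Γ'), and conversely for every instantiation 𝓘' of Γ' there is an instantiation 𝓘 of Γ with 𝓘'(Γ') = 𝓘(Γ). -/
/-- A type context: relation variables, type variables, a declaration mapping,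
special attributes, and an attribute constraint (a Boolean condition on sets of
relation variables). Attribute names are modeled as natural numbers. -/
structure TypeContext (RV TV : Type) where
  Relvars : Finset RV
  Typevars : Finset TV
  decl : RV → Finset TV
  Specattrs : Finset ℕ
  constraint : ℕ → Finset RV → Prop

variable {RV TV : Type}

/-- An instantiation of a type context: `IT` assigns pairwise disjoint types to
type variables, none containing a special attribute, and `IA` assigns to each
special attribute a set of relation variables satisfying its constraint. -/
def IsInstantiation (Γ : TypeContext RV TV) (IT : TV → Finset ℕ)
    (IA : ℕ → Finset RV) : Prop :=
  (∀ a ∈ Γ.Typevars, ∀ b ∈ Γ.Typevars, a ≠ b → Disjoint (IT a) (IT b)) ∧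
  (∀ a ∈ Γ.Typevars, ∀ A ∈ Γ.Specattrs, A ∉ IT a) ∧
  (∀ A ∈ Γ.Specattrs, IA A ⊆ Γ.Relvars ∧ Γ.constraint A (IA A))

/-- The image type assignment `𝓘(Γ)` of a type context under an instantiation. -/
def imageTA [DecidableEq RV] [DecidableEq TV] (Γ : TypeContext RV TV)
    (IT : TV → Finset ℕ) (IA : ℕ → Finset RV) (r : RV) : Finset ℕ :=
  (Γ.decl r).biUnion IT ∪ Γ.Specattrs.filter (fun A => r ∈ IA A)

/-- Extending a type context with a fresh special attribute `A` (with the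
constraint that `IA A`, if nonempty, is exactly the set of relation variables
whose declaration contains some fixed type variable) preserves the possible
image type assignments, in both directions. -/
theorem extension_preserves_images [DecidableEq RV] [DecidableEq TV]
    (Γ Γ' : TypeContext RV TV) (A : ℕ) (hA : A ∉ Γ.Specattrs)
    (hdecl : ∀ r ∈ Γ.Relvars, Γ.decl r ⊆ Γ.Typevars)
    (hRel : Γ'.Relvars = Γ.Relvars) (hTy : Γ'.Typevars = Γ.Typevars)
    (hde : Γ'.decl = Γ.decl) (hSp : Γ'.Specattrs = insert A Γ.Specattrs)
    (hcon : ∀ B ∈ Γ.Specattrs, ∀ S, (Γ'.constraint B S ↔ Γ.constraint B S))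
    (hconA : ∀ S : Finset RV, Γ'.constraint A S ↔
      (S.Nonempty → ∃ a ∈ Γ.Typevars, S = Γ.Relvars.filter (fun r => a ∈ Γ.decl r))) :
    (∀ IT IA, IsInstantiation Γ IT IA →
      ∃ IT' IA', IsInstantiation Γ' IT' IA' ∧
        ∀ r ∈ Γ.Relvars, imageTA Γ IT IA r = imageTA Γ' IT' IA' r) ∧
    (∀ IT' IA', IsInstantiation Γ' IT' IA' →
      ∃ IT IA, IsInstantiation Γ IT IA ∧
        ∀ r ∈ Γ.Relvars, imageTA Γ' IT' IA' r = imageTA Γ IT IA r) := by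
  constructor
  · -- forward direction
    intro IT IA hI
    obtain ⟨hdisj, hspec, hcon0⟩ := hI
    by_cases h : ∃ a ∈ Γ.Typevars, A ∈ IT a
    · obtain ⟨a, ha, hAa⟩ := h
      refine ⟨fun b => (IT b).erase A,
        fun B => if B = A then Γ.Relvars.filter (fun r => a ∈ Γ.decl r) else IA B, ?_, ?_⟩
      · refine ⟨?_, ?_, ?_⟩
        · intro b hb c hc hbc
          rw [hTy] at hb hc
          exact Finset.disjoint_of_subset_left (Finset.erase_subset _ _)
            (Finset.disjoint_of_subset_right (Finset.erase_subset _ _) (hdisj b hb c hc hbc))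
        · intro b hb B hB
          rw [hTy] at hb; rw [hSp] at hB
          rcases Finset.mem_insert.mp hB with rfl | hB
          · exact Finset.notMem_erase _ _
          · intro hmem
            exact hspec b hb B hB (Finset.mem_of_mem_erase hmem)
        · intro B hB
          rw [hSp] at hB
          rcases Finset.mem_insert.mp hB with rfl | hB
          · simp only [if_pos rfl]
            refine ⟨?_, ?_⟩
            · rw [hRel]; exact Finset.filter_subset _ _
            · rw [hconA]; intro _; exact ⟨a, ha, rfl⟩
          · have hne : B ≠ A := fun h => hA (h ▸ hB)
            simp only [if_neg hne]
            refine ⟨?_, ?_⟩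
            · rw [hRel]; exact (hcon0 B hB).1
            · rw [hcon B hB]; exact (hcon0 B hB).2
      · intro r hr
        ext x
        simp only [imageTA, Finset.mem_union, Finset.mem_biUnion, Finset.mem_filter,
          Finset.mem_erase, hde, hSp, Finset.mem_insert]
        by_cases hx : x = A
        · subst hx
          constructor
          · rintro (⟨b, hb, hAb⟩ | ⟨hAS, _⟩)
            · have hba : b = a := by
                by_contra hba
                exact Finset.disjoint_left.mp (hdisj b (hdecl r hr hb) a ha hba) hAb hAa
              right
              refine ⟨Or.inl rfl, ?_⟩
              rw [if_pos rfl, Finset.mem_filter]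
              exact ⟨hr, hba ▸ hb⟩
            · exact absurd hAS hA
          · rintro (⟨b, hb, hne, _⟩ | ⟨_, hmem⟩)
            · exact absurd rfl hne
            · rw [if_pos rfl, Finset.mem_filter] at hmem
              exact Or.inl ⟨a, hmem.2, hAa⟩
        · constructor
          · rintro (⟨b, hb, hxb⟩ | ⟨hxS, hxIA⟩)
            · exact Or.inl ⟨b, hb, hx, hxb⟩
            · exact Or.inr ⟨Or.inr hxS, by simp only [if_neg hx]; exact hxIA⟩
          · rintro (⟨b, hb, _, hxb⟩ | ⟨hxS, hxIA⟩)
            · exact Or.inl ⟨b, hb, hxb⟩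
            · rcases hxS with rfl | hxS
              · exact absurd rfl hx
              · exact Or.inr ⟨hxS, by simpa only [if_neg hx] using hxIA⟩
    · push_neg at h
      refine ⟨IT, fun B => if B = A then ∅ else IA B, ?_, ?_⟩
      · refine ⟨?_, ?_, ?_⟩
        · intro b hb c hc hbc
          rw [hTy] at hb hc
          exact hdisj b hb c hc hbc
        · intro b hb B hB
          rw [hTy] at hb; rw [hSp] at hB
          rcases Finset.mem_insert.mp hB with rfl | hB
          · exact h b hb
          · exact hspec b hb B hB
        · intro B hB
          rw [hSp] at hB
          rcases Finset.mem_insert.mp hB with rfl | hB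
          · simp only [if_pos rfl]
            refine ⟨Finset.empty_subset _, ?_⟩
            rw [hconA]; intro he; exact absurd he Finset.not_nonempty_empty
          · have hne : B ≠ A := fun h' => hA (h' ▸ hB)
            simp only [if_neg hne]
            refine ⟨?_, ?_⟩
            · rw [hRel]; exact (hcon0 B hB).1
            · rw [hcon B hB]; exact (hcon0 B hB).2
      · intro r hr
        ext x
        simp only [imageTA, Finset.mem_union, Finset.mem_biUnion, Finset.mem_filter,
          hde, hSp, Finset.mem_insert]
        by_cases hx : x = A
        · subst hx
          constructor
          · rintro (⟨b, hb, hAb⟩ | ⟨hAS, _⟩)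
            · exact absurd hAb (h b (hdecl r hr hb))
            · exact absurd hAS hA
          · rintro (⟨b, hb, hAb⟩ | ⟨_, hmem⟩)
            · exact absurd hAb (h b (hdecl r hr hb))
            · rw [if_pos rfl] at hmem
              exact absurd hmem (Finset.notMem_empty r)
        · constructor
          · rintro (⟨b, hb, hxb⟩ | ⟨hxS, hxIA⟩)
            · exact Or.inl ⟨b, hb, hxb⟩
            · exact Or.inr ⟨Or.inr hxS, by simp only [if_neg hx]; exact hxIA⟩
          · rintro (⟨b, hb, hxb⟩ | ⟨hxS, hxIA⟩)
            · exact Or.inl ⟨b, hb, hxb⟩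
            · rcases hxS with rfl | hxS
              · exact absurd rfl hx
              · exact Or.inr ⟨hxS, by simpa only [if_neg hx] using hxIA⟩
  · -- backward direction
    intro IT' IA' hI
    obtain ⟨hdisj, hspec, hcon0⟩ := hI
    have hAmem : A ∈ Γ'.Specattrs := by rw [hSp]; exact Finset.mem_insert_self _ _
    have hAspec : ∀ b ∈ Γ.Typevars, A ∉ IT' b := by
      intro b hb
      exact hspec b (hTy ▸ hb) A hAmem
    have hAcon := hcon0 A hAmem
    rw [hconA] at hAcon
    by_cases h : (IA' A).Nonempty
    · obtain ⟨a, ha, hSa⟩ := hAcon.2 h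
      refine ⟨fun b => if b = a then insert A (IT' a) else IT' b, IA', ?_, ?_⟩
      · refine ⟨?_, ?_, ?_⟩
        · intro b hb c hc hbc
          have hd := hdisj b (hTy ▸ hb) c (hTy ▸ hc) hbc
          by_cases hb' : b = a
          · subst hb'
            have hc' : ¬ c = b := fun h' => hbc h'.symm
            beta_reduce
            rw [if_pos rfl, if_neg hc', Finset.disjoint_insert_left]
            exact ⟨hAspec c hc, hd⟩
          · by_cases hc' : c = a
            · subst hc'
              beta_reduce
              rw [if_neg hb', if_pos rfl, Finset.disjoint_insert_right]
              exact ⟨hAspec b hb, hd⟩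
            · beta_reduce
              rw [if_neg hb', if_neg hc']; exact hd
        · intro b hb B hB
          have hBmem : B ∈ Γ'.Specattrs := by rw [hSp]; exact Finset.mem_insert_of_mem hB
          have hBne : B ≠ A := fun h' => hA (h' ▸ hB)
          have := hspec b (hTy ▸ hb) B hBmem
          by_cases hb' : b = a
          · subst hb'
            beta_reduce
            rw [if_pos rfl, Finset.mem_insert]
            rintro (rfl | hmem)
            · exact hBne rfl
            · exact this hmem
          · beta_reduce
            rw [if_neg hb']
            exact this
        · intro B hB
          have hBmem : B ∈ Γ'.Specattrs := by rw [hSp]; exact Finset.mem_insert_of_mem hB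
          refine ⟨?_, ?_⟩
          · have := (hcon0 B hBmem).1; rwa [hRel] at this
          · rw [← hcon B hB]; exact (hcon0 B hBmem).2
      · intro r hr
        ext x
        simp only [imageTA, Finset.mem_union, Finset.mem_biUnion, Finset.mem_filter,
          hde, hSp, Finset.mem_insert]
        by_cases hx : x = A
        · subst hx
          constructor
          · rintro (⟨b, hb, hAb⟩ | ⟨hAS, hmem⟩)
            · exact absurd hAb (hAspec b (hdecl r hr hb))
            · rcases hAS with _ | hAS
              · rw [hSa] at hmem
                have har : a ∈ Γ.decl r := (Finset.mem_filter.mp hmem).2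
                exact Or.inl ⟨a, har, by rw [if_pos rfl]; exact Finset.mem_insert_self _ _⟩
              · exact absurd hAS hA
          · rintro (⟨b, hb, hAb⟩ | ⟨hAS, _⟩)
            · by_cases hb' : b = a
              · subst hb'
                right
                refine ⟨Or.inl rfl, ?_⟩
                rw [hSa]
                exact Finset.mem_filter.mpr ⟨hr, hb⟩
              · rw [if_neg hb'] at hAb
                exact absurd hAb (hAspec b (hdecl r hr hb))
            · exact absurd hAS hA
        · have hIT : ∀ b, x ∈ (if b = a then insert A (IT' a) else IT' b) ↔ x ∈ IT' b := by
            intro b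
            by_cases hb' : b = a
            · subst hb'
              rw [if_pos rfl, Finset.mem_insert]
              exact ⟨fun h' => h'.resolve_left hx, Or.inr⟩
            · rw [if_neg hb']
          constructor
          · rintro (⟨b, hb, hxb⟩ | ⟨hxS, hxIA⟩)
            · exact Or.inl ⟨b, hb, (hIT b).mpr hxb⟩
            · rcases hxS with rfl | hxS
              · exact absurd rfl hx
              · exact Or.inr ⟨hxS, hxIA⟩
          · rintro (⟨b, hb, hxb⟩ | ⟨hxS, hxIA⟩)
            · exact Or.inl ⟨b, hb, (hIT b).mp hxb⟩
            · exact Or.inr ⟨Or.inr hxS, hxIA⟩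
    · refine ⟨IT', IA', ?_, ?_⟩
      · refine ⟨?_, ?_, ?_⟩
        · intro b hb c hc hbc
          exact hdisj b (hTy ▸ hb) c (hTy ▸ hc) hbc
        · intro b hb B hB
          exact hspec b (hTy ▸ hb) B (by rw [hSp]; exact Finset.mem_insert_of_mem hB)
        · intro B hB
          have hBmem : B ∈ Γ'.Specattrs := by rw [hSp]; exact Finset.mem_insert_of_mem hB
          refine ⟨?_, ?_⟩
          · have := (hcon0 B hBmem).1; rwa [hRel] at this
          · rw [← hcon B hB]; exact (hcon0 B hBmem).2
      · intro r hr
        have hempty : IA' A = ∅ := Finset.not_nonempty_iff_eq_empty.mp h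
        ext x
        simp only [imageTA, Finset.mem_union, Finset.mem_biUnion, Finset.mem_filter,
          hde, hSp, Finset.mem_insert]
        constructor
        · rintro (⟨b, hb, hxb⟩ | ⟨hxS, hxIA⟩)
          · exact Or.inl ⟨b, hb, hxb⟩
          · rcases hxS with rfl | hxS
            · rw [hempty] at hxIA
              exact absurd hxIA (Finset.notMem_empty r)
            · exact Or.inr ⟨hxS, hxIA⟩
        · rintro (⟨b, hb, hxb⟩ | ⟨hxS, hxIA⟩)
          · exact Or.inl ⟨b, hb, hxb⟩
          · exact Or.inr ⟨Or.inr hxS, hxIA⟩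
end

section
/- Let e be an expression over the relation variables {r, s} built only from relation variables, ∪, −, ⋈, ×, and π_∅, let T(r) = {A, B}, T(s) = {B, C} with A, B, C distinct, suppose T ⊢ e : {A, B}, and let D be the database with D(r) = {[A:x, B:y], [A:u, B:v]} and D(s) = {[B:y, C:z]} where x, y, z, u, v are data elements with (x,y) ≠ (u,v) and y ≠ v. Then in the value of e on D, the tuples [A:x, B:y] and [A:u, B:v] either both occur or both do not occur; hence e(D) ≠ r ⋉ s (D) = {[A:x, B:y]}. -/
/-- Tuples are partial assignments of data elements to attribute names;
a relation of type τ consists of tuples with domain τ. -/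
def Compat {U : Type} (t₁ t₂ : ℕ → Option U) : Prop :=
  ∀ n (a b : U), t₁ n = some a → t₂ n = some b → a = b

def mergeTup {U : Type} (t₁ t₂ : ℕ → Option U) : ℕ → Option U :=
  fun n => (t₁ n).orElse (fun _ => t₂ n)

/-- Semantics of relational algebra expressions (selection is irrelevant here
and interpreted as identity; it is excluded by `BasicPE` below). -/
def eval {V U : Type} (D : V → Set (ℕ → Option U)) : RAExp V → Set (ℕ → Option U)
  | .rel r => D r
  | .union e₁ e₂ => eval D e₁ ∪ eval D e₂
  | .diff e₁ e₂ => eval D e₁ \ eval D e₂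
  | .join e₁ e₂ | .prod e₁ e₂ =>
      {t | ∃ t₁ ∈ eval D e₁, ∃ t₂ ∈ eval D e₂, Compat t₁ t₂ ∧ t = mergeTup t₁ t₂}
  | .select _ e => eval D e
  | .proj As e => (fun t n => if n ∈ As then t n else none) '' eval D e
  | .rename A B e =>
      (fun t n => if n = B then t A else if n = A then none else t n) '' eval D e
  | .projOut A e => (fun t n => if n = A then none else t n) '' eval D e

/-- Expressions built only from relation variables, ∪, −, ⋈, ×, and π_∅. -/
inductive BasicPE {V : Type} : RAExp V → Prop where
  | rel (r : V) : BasicPE (.rel r)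
  | union {e₁ e₂} : BasicPE e₁ → BasicPE e₂ → BasicPE (.union e₁ e₂)
  | diff {e₁ e₂} : BasicPE e₁ → BasicPE e₂ → BasicPE (.diff e₁ e₂)
  | join {e₁ e₂} : BasicPE e₁ → BasicPE e₂ → BasicPE (.join e₁ e₂)
  | prod {e₁ e₂} : BasicPE e₁ → BasicPE e₂ → BasicPE (.prod e₁ e₂)
  | projEmpty {e} : BasicPE e → BasicPE (.proj [] e)

namespace SJAux
variable {U : Type}

lemma compat_self (t : ℕ → Option U) : Compat t t := by
  intro n a b h1 h2; rw [h1] at h2; exact Option.some_inj.mp h2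
lemma merge_self (t : ℕ → Option U) : mergeTup t t = t := by
  funext n; cases h : t n <;> simp [mergeTup, h]
lemma compat_none_left (t : ℕ → Option U) : Compat (fun _ => none) t := by
  intro n a b h1 _; simp at h1
lemma compat_none_right (t : ℕ → Option U) : Compat t (fun _ => none) := by
  intro n a b _ h2; simp at h2
lemma merge_none_left (t : ℕ → Option U) : mergeTup (fun _ => none) t = t := rfl
lemma merge_none_right (t : ℕ → Option U) : mergeTup t (fun _ => none) = t := by
  funext n; cases h : t n <;> simp [mergeTup, h]
lemma compat_merge_right {a b : ℕ → Option U} (h : Compat a b) :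
    Compat a (mergeTup a b) := by
  intro n p q h1 h2
  simp [mergeTup, h1] at h2; exact h2
lemma compat_merge_left {a b : ℕ → Option U} (h : Compat a b) :
    Compat (mergeTup a b) a := by
  intro n p q h1 h2
  simp [mergeTup, h2] at h1; exact h1.symm
lemma compat_merge_right' {a b : ℕ → Option U} (h : Compat a b) :
    Compat b (mergeTup a b) := by
  intro n p q h1 h2
  cases ha : a n with
  | none => simp [mergeTup, ha, h1] at h2; exact h2
  | some c => simp [mergeTup, ha] at h2; exact (h n c p ha h1).symm.trans h2
lemma compat_merge_left' {a b : ℕ → Option U} (h : Compat a b) :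
    Compat (mergeTup a b) b := by
  intro n p q h1 h2
  cases ha : a n with
  | none => simp [mergeTup, ha, h2] at h1; exact h1.symm
  | some c => simp [mergeTup, ha] at h1; exact h1.symm.trans (h n c q ha h2)
lemma merge_merge_right {a b : ℕ → Option U} :
    mergeTup a (mergeTup a b) = mergeTup a b := by
  funext n; cases h : a n <;> simp [mergeTup, h]
lemma merge_merge_left {a b : ℕ → Option U} :
    mergeTup (mergeTup a b) a = mergeTup a b := by
  funext n; cases h : a n <;> cases h2 : b n <;> simp [mergeTup, h, h2]
lemma merge_merge_right' {a b : ℕ → Option U} (hc : Compat a b) :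
    mergeTup b (mergeTup a b) = mergeTup a b := by
  funext n
  cases h : a n with
  | none => simp [mergeTup, h]
  | some c =>
    cases h2 : b n with
    | none => simp [mergeTup, h, h2]
    | some d => simp [mergeTup, h, h2]; exact hc n c d h h2 ▸ rfl
lemma merge_merge_left' {a b : ℕ → Option U} :
    mergeTup (mergeTup a b) b = mergeTup a b := by
  funext n; cases h : a n <;> cases h2 : b n <;> simp [mergeTup, h, h2]
lemma compat_of_compat_merge {a b c : ℕ → Option U}
    (h : Compat c (mergeTup a b)) : Compat c a := by
  intro n p q h1 h2; exact h n p q h1 (by simp [mergeTup, h2])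
lemma compat_of_merge_compat {a b c : ℕ → Option U}
    (h : Compat (mergeTup a b) c) : Compat a c := by
  intro n p q h1 h2; exact h n p q (by simp [mergeTup, h1]) h2

def Qprop (A B C : ℕ) (t₁ t₂ ts : ℕ → Option U) (τ : Finset ℕ)
    (X : Set (ℕ → Option U)) : Prop :=
  (τ = ∅ ∨ τ = {A, B} ∨ τ = {B, C} ∨ τ = {A, B, C}) ∧
  (τ = ∅ → X ⊆ {fun _ => none}) ∧
  (τ = {A, B} → X ⊆ {t₁, t₂} ∧ (t₁ ∈ X ↔ t₂ ∈ X)) ∧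
  (τ = {B, C} → X ⊆ {ts}) ∧
  (τ = ({A, B, C} : Finset ℕ) → X ⊆ {mergeTup t₁ ts})

section
variable {A B C : ℕ} (hAB : A ≠ B) (hAC : A ≠ C) (hBC : B ≠ C)
  {t₁ t₂ ts : ℕ → Option U}

include hAB hAC hBC

lemma ne_AB_empty : ({A, B} : Finset ℕ) ≠ ∅ := by
  intro h; have : A ∈ ({A, B} : Finset ℕ) := by simp
  rw [h] at this; simp at this
lemma ne_BC_empty : ({B, C} : Finset ℕ) ≠ ∅ := by
  intro h; have : B ∈ ({B, C} : Finset ℕ) := by simp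
  rw [h] at this; simp at this
lemma ne_ABC_empty : ({A, B, C} : Finset ℕ) ≠ ∅ := by
  intro h; have : A ∈ ({A, B, C} : Finset ℕ) := by simp
  rw [h] at this; simp at this
lemma ne_AB_BC : ({A, B} : Finset ℕ) ≠ {B, C} := by
  intro h; have : A ∈ ({B, C} : Finset ℕ) := by rw [← h]; simp
  simp [hAB, hAC] at this
lemma ne_AB_ABC : ({A, B} : Finset ℕ) ≠ {A, B, C} := by
  intro h; have : C ∈ ({A, B} : Finset ℕ) := by rw [h]; simp
  simp [hAC.symm, hBC.symm] at this
lemma ne_BC_ABC : ({B, C} : Finset ℕ) ≠ {A, B, C} := by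
  intro h; have : A ∈ ({B, C} : Finset ℕ) := by rw [h]; simp
  simp [hAB, hAC] at this

lemma Qprop_empty {X : Set (ℕ → Option U)} (h : X ⊆ {fun _ => none}) :
    Qprop A B C t₁ t₂ ts ∅ X := by
  refine ⟨Or.inl rfl, fun _ => h, ?_, ?_, ?_⟩
  · intro h'; exact absurd h'.symm (ne_AB_empty hAB hAC hBC)
  · intro h'; exact absurd h'.symm (ne_BC_empty hAB hAC hBC)
  · intro h'; exact absurd h'.symm (ne_ABC_empty hAB hAC hBC)
lemma Qprop_AB {X : Set (ℕ → Option U)} (h : X ⊆ {t₁, t₂})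
    (h2 : t₁ ∈ X ↔ t₂ ∈ X) : Qprop A B C t₁ t₂ ts {A, B} X := by
  refine ⟨Or.inr (Or.inl rfl), ?_, fun _ => ⟨h, h2⟩, ?_, ?_⟩
  · intro h'; exact absurd h' (ne_AB_empty hAB hAC hBC)
  · intro h'; exact absurd h' (ne_AB_BC hAB hAC hBC)
  · intro h'; exact absurd h' (ne_AB_ABC hAB hAC hBC)
lemma Qprop_BC {X : Set (ℕ → Option U)} (h : X ⊆ {ts}) :
    Qprop A B C t₁ t₂ ts {B, C} X := by
  refine ⟨Or.inr (Or.inr (Or.inl rfl)), ?_, ?_, fun _ => h, ?_⟩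
  · intro h'; exact absurd h' (ne_BC_empty hAB hAC hBC)
  · intro h'; exact absurd h'.symm (ne_AB_BC hAB hAC hBC)
  · intro h'; exact absurd h' (ne_BC_ABC hAB hAC hBC)
lemma Qprop_ABC {X : Set (ℕ → Option U)} (h : X ⊆ {mergeTup t₁ ts}) :
    Qprop A B C t₁ t₂ ts {A, B, C} X := by
  refine ⟨Or.inr (Or.inr (Or.inr rfl)), ?_, ?_, ?_, fun _ => h⟩
  · intro h'; exact absurd h' (ne_ABC_empty hAB hAC hBC)
  · intro h'; exact absurd h'.symm (ne_AB_ABC hAB hAC hBC)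
  · intro h'; exact absurd h'.symm (ne_BC_ABC hAB hAC hBC)

lemma Qprop_union {τ} {X Y : Set (ℕ → Option U)}
    (hX : Qprop A B C t₁ t₂ ts τ X) (hY : Qprop A B C t₁ t₂ ts τ Y) :
    Qprop A B C t₁ t₂ ts τ (X ∪ Y) := by
  obtain ⟨hd, h1, h2, h3, h4⟩ := hX
  obtain ⟨-, g1, g2, g3, g4⟩ := hY
  refine ⟨hd, ?_, ?_, ?_, ?_⟩
  · intro h'; exact Set.union_subset (h1 h') (g1 h')
  · intro h'
    exact ⟨Set.union_subset (h2 h').1 (g2 h').1, by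
      simp only [Set.mem_union]
      rw [(h2 h').2, (g2 h').2]⟩
  · intro h'; exact Set.union_subset (h3 h') (g3 h')
  · intro h'; exact Set.union_subset (h4 h') (g4 h')

lemma Qprop_diff {τ} {X Y : Set (ℕ → Option U)}
    (hX : Qprop A B C t₁ t₂ ts τ X) (hY : Qprop A B C t₁ t₂ ts τ Y) :
    Qprop A B C t₁ t₂ ts τ (X \ Y) := by
  obtain ⟨hd, h1, h2, h3, h4⟩ := hX
  obtain ⟨-, g1, g2, g3, g4⟩ := hY
  refine ⟨hd, ?_, ?_, ?_, ?_⟩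
  · intro h'; exact (Set.diff_subset).trans (h1 h')
  · intro h'
    exact ⟨(Set.diff_subset).trans (h2 h').1, by
      simp only [Set.mem_diff]
      rw [(h2 h').2, (g2 h').2]⟩
  · intro h'; exact (Set.diff_subset).trans (h3 h')
  · intro h'; exact (Set.diff_subset).trans (h4 h')

lemma Qprop_join (hne : t₁ ≠ t₂)
    (hc12 : ¬ Compat t₁ t₂) (hc21 : ¬ Compat t₂ t₁)
    (hc1s : Compat t₁ ts) (hcs1 : Compat ts t₁)
    (hms1 : mergeTup ts t₁ = mergeTup t₁ ts)
    (hc2s : ¬ Compat t₂ ts) (hcs2 : ¬ Compat ts t₂)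
    {τ₁ τ₂ : Finset ℕ} {X₁ X₂ J : Set (ℕ → Option U)}
    (hQ1 : Qprop A B C t₁ t₂ ts τ₁ X₁) (hQ2 : Qprop A B C t₁ t₂ ts τ₂ X₂)
    (hJ : ∀ t, t ∈ J ↔ ∃ a ∈ X₁, ∃ b ∈ X₂, Compat a b ∧ t = mergeTup a b) :
    Qprop A B C t₁ t₂ ts (τ₁ ∪ τ₂) J := by
  have hc2m : ¬ Compat t₂ (mergeTup t₁ ts) :=
    fun h => hc21 (compat_of_compat_merge h)
  have hcm2 : ¬ Compat (mergeTup t₁ ts) t₂ :=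
    fun h => hc12 (compat_of_merge_compat h)
  have hu1 : ({A, B} : Finset ℕ) ∪ {B, C} = {A, B, C} := by ext n; simp; try tauto
  have hu2 : ({A, B} : Finset ℕ) ∪ {A, B, C} = {A, B, C} := by ext n; simp; try tauto
  have hu3 : ({B, C} : Finset ℕ) ∪ {A, B} = {A, B, C} := by ext n; simp; try tauto
  have hu4 : ({B, C} : Finset ℕ) ∪ {A, B, C} = {A, B, C} := by ext n; simp; try tauto
  have hu5 : ({A, B, C} : Finset ℕ) ∪ {A, B} = {A, B, C} := by ext n; simp; try tauto
  have hu6 : ({A, B, C} : Finset ℕ) ∪ {B, C} = {A, B, C} := by ext n; simp; try tauto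
  obtain ⟨hd1, e1, ab1, bc1, abc1⟩ := hQ1
  obtain ⟨hd2, e2, ab2, bc2, abc2⟩ := hQ2
  rcases hd1 with rfl | rfl | rfl | rfl
  · -- τ₁ = ∅ : J behaves like X₂ gated by tE ∈ X₁
    have hmem : ∀ t, t ∈ J ↔ ((fun _ => none) ∈ X₁ ∧ t ∈ X₂) := by
      intro t
      rw [hJ]
      constructor
      · rintro ⟨a, ha, b, hb, hcab, rfl⟩
        have ha' := e1 rfl ha
        simp only [Set.mem_singleton_iff] at ha'
        subst ha'
        rw [merge_none_left]; exact ⟨ha, hb⟩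
      · rintro ⟨h1, h2⟩
        exact ⟨_, h1, t, h2, compat_none_left t, (merge_none_left t).symm⟩
    rw [Finset.empty_union]
    rcases hd2 with rfl | rfl | rfl | rfl
    · exact Qprop_empty hAB hAC hBC (fun t ht => e2 rfl ((hmem t).1 ht).2)
    · refine Qprop_AB hAB hAC hBC (fun t ht => (ab2 rfl).1 ((hmem t).1 ht).2) ?_
      rw [hmem t₁, hmem t₂, (ab2 rfl).2]
    · exact Qprop_BC hAB hAC hBC (fun t ht => bc2 rfl ((hmem t).1 ht).2)
    · exact Qprop_ABC hAB hAC hBC (fun t ht => abc2 rfl ((hmem t).1 ht).2)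
  · -- τ₁ = {A, B}
    have s1 : X₁ ⊆ ({t₁, t₂} : Set _) := (ab1 rfl).1
    have i1 := (ab1 rfl).2
    rcases hd2 with rfl | rfl | rfl | rfl
    · -- τ₂ = ∅
      have hmem : ∀ t, t ∈ J ↔ (t ∈ X₁ ∧ (fun _ => none) ∈ X₂) := by
        intro t
        rw [hJ]
        constructor
        · rintro ⟨a, ha, b, hb, hcab, rfl⟩
          have hb' := e2 rfl hb
          simp only [Set.mem_singleton_iff] at hb'
          subst hb'
          rw [merge_none_right]; exact ⟨ha, hb⟩
        · rintro ⟨h1, h2⟩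
          exact ⟨t, h1, _, h2, compat_none_right t, (merge_none_right t).symm⟩
      rw [Finset.union_empty]
      refine Qprop_AB hAB hAC hBC (fun t ht => s1 ((hmem t).1 ht).1) ?_
      rw [hmem t₁, hmem t₂, i1]
    · -- τ₂ = {A, B}
      have s2 : X₂ ⊆ ({t₁, t₂} : Set _) := (ab2 rfl).1
      have i2 := (ab2 rfl).2
      rw [Finset.union_self]
      have m1 : t₁ ∈ J ↔ (t₁ ∈ X₁ ∧ t₁ ∈ X₂) := by
        rw [hJ]
        constructor
        · rintro ⟨a, ha, b, hb, hcab, heq⟩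
          have ha' := s1 ha; have hb' := s2 hb
          simp only [Set.mem_insert_iff, Set.mem_singleton_iff] at ha' hb'
          rcases ha' with rfl | rfl <;> rcases hb' with rfl | rfl
          · exact ⟨ha, hb⟩
          · exact absurd hcab hc12
          · exact absurd hcab hc21
          · rw [merge_self] at heq; exact absurd heq hne
        · rintro ⟨h1, h2⟩
          exact ⟨t₁, h1, t₁, h2, compat_self t₁, (merge_self t₁).symm⟩
      have m2 : t₂ ∈ J ↔ (t₂ ∈ X₁ ∧ t₂ ∈ X₂) := by
        rw [hJ]
        constructor
        · rintro ⟨a, ha, b, hb, hcab, heq⟩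
          have ha' := s1 ha; have hb' := s2 hb
          simp only [Set.mem_insert_iff, Set.mem_singleton_iff] at ha' hb'
          rcases ha' with rfl | rfl <;> rcases hb' with rfl | rfl
          · rw [merge_self] at heq; exact absurd heq.symm hne
          · exact absurd hcab hc12
          · exact absurd hcab hc21
          · exact ⟨ha, hb⟩
        · rintro ⟨h1, h2⟩
          exact ⟨t₂, h1, t₂, h2, compat_self t₂, (merge_self t₂).symm⟩
      refine Qprop_AB hAB hAC hBC ?_ ?_
      · intro t ht
        rw [hJ] at ht
        obtain ⟨a, ha, b, hb, hcab, rfl⟩ := ht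
        have ha' := s1 ha; have hb' := s2 hb
        simp only [Set.mem_insert_iff, Set.mem_singleton_iff] at ha' hb'
        rcases ha' with rfl | rfl <;> rcases hb' with rfl | rfl
        · rw [merge_self]; exact Set.mem_insert _ _
        · exact absurd hcab hc12
        · exact absurd hcab hc21
        · rw [merge_self]; exact Set.mem_insert_of_mem _ rfl
      · rw [m1, m2, i1, i2]
    · -- τ₂ = {B, C}
      rw [hu1]
      refine Qprop_ABC hAB hAC hBC ?_
      intro t ht
      rw [hJ] at ht
      obtain ⟨a, ha, b, hb, hcab, rfl⟩ := ht
      have ha' := s1 ha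
      have hb' := bc2 rfl hb
      simp only [Set.mem_insert_iff, Set.mem_singleton_iff] at ha' hb'
      subst hb'
      rcases ha' with rfl | rfl
      · rfl
      · exact absurd hcab hc2s
    · -- τ₂ = {A, B, C}
      rw [hu2]
      refine Qprop_ABC hAB hAC hBC ?_
      intro t ht
      rw [hJ] at ht
      obtain ⟨a, ha, b, hb, hcab, rfl⟩ := ht
      have ha' := s1 ha
      have hb' := abc2 rfl hb
      simp only [Set.mem_insert_iff, Set.mem_singleton_iff] at ha' hb'
      subst hb'
      rcases ha' with rfl | rfl
      · rw [merge_merge_right]; rfl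
      · exact absurd hcab hc2m
  · -- τ₁ = {B, C}
    have s1 : X₁ ⊆ ({ts} : Set _) := bc1 rfl
    rcases hd2 with rfl | rfl | rfl | rfl
    · -- τ₂ = ∅
      have hmem : ∀ t, t ∈ J ↔ (t ∈ X₁ ∧ (fun _ => none) ∈ X₂) := by
        intro t
        rw [hJ]
        constructor
        · rintro ⟨a, ha, b, hb, hcab, rfl⟩
          have hb' := e2 rfl hb
          simp only [Set.mem_singleton_iff] at hb'
          subst hb'
          rw [merge_none_right]; exact ⟨ha, hb⟩
        · rintro ⟨h1, h2⟩
          exact ⟨t, h1, _, h2, compat_none_right t, (merge_none_right t).symm⟩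
      rw [Finset.union_empty]
      exact Qprop_BC hAB hAC hBC (fun t ht => s1 ((hmem t).1 ht).1)
    · -- τ₂ = {A, B}
      have s2 : X₂ ⊆ ({t₁, t₂} : Set _) := (ab2 rfl).1
      rw [hu3]
      refine Qprop_ABC hAB hAC hBC ?_
      intro t ht
      rw [hJ] at ht
      obtain ⟨a, ha, b, hb, hcab, rfl⟩ := ht
      have ha' := s1 ha; have hb' := s2 hb
      simp only [Set.mem_insert_iff, Set.mem_singleton_iff] at ha' hb'
      subst ha'
      rcases hb' with rfl | rfl
      · rw [hms1]; rfl
      · exact absurd hcab hcs2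
    · -- τ₂ = {B, C}
      have s2 : X₂ ⊆ ({ts} : Set _) := bc2 rfl
      rw [Finset.union_self]
      refine Qprop_BC hAB hAC hBC ?_
      intro t ht
      rw [hJ] at ht
      obtain ⟨a, ha, b, hb, hcab, rfl⟩ := ht
      have ha' := s1 ha; have hb' := s2 hb
      simp only [Set.mem_singleton_iff] at ha' hb'
      subst ha'; subst hb'
      rw [merge_self]; rfl
    · -- τ₂ = {A, B, C}
      rw [hu4]
      refine Qprop_ABC hAB hAC hBC ?_
      intro t ht
      rw [hJ] at ht
      obtain ⟨a, ha, b, hb, hcab, rfl⟩ := ht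
      have ha' := s1 ha; have hb' := abc2 rfl hb
      simp only [Set.mem_singleton_iff] at ha' hb'
      subst ha'; subst hb'
      rw [merge_merge_right' hc1s]; rfl
  · -- τ₁ = {A, B, C}
    have s1 : X₁ ⊆ ({mergeTup t₁ ts} : Set _) := abc1 rfl
    rcases hd2 with rfl | rfl | rfl | rfl
    · -- τ₂ = ∅
      have hmem : ∀ t, t ∈ J ↔ (t ∈ X₁ ∧ (fun _ => none) ∈ X₂) := by
        intro t
        rw [hJ]
        constructor
        · rintro ⟨a, ha, b, hb, hcab, rfl⟩
          have hb' := e2 rfl hb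
          simp only [Set.mem_singleton_iff] at hb'
          subst hb'
          rw [merge_none_right]; exact ⟨ha, hb⟩
        · rintro ⟨h1, h2⟩
          exact ⟨t, h1, _, h2, compat_none_right t, (merge_none_right t).symm⟩
      rw [Finset.union_empty]
      exact Qprop_ABC hAB hAC hBC (fun t ht => s1 ((hmem t).1 ht).1)
    · -- τ₂ = {A, B}
      have s2 : X₂ ⊆ ({t₁, t₂} : Set _) := (ab2 rfl).1
      rw [hu5]
      refine Qprop_ABC hAB hAC hBC ?_
      intro t ht
      rw [hJ] at ht
      obtain ⟨a, ha, b, hb, hcab, rfl⟩ := ht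
      have ha' := s1 ha; have hb' := s2 hb
      simp only [Set.mem_insert_iff, Set.mem_singleton_iff] at ha' hb'
      subst ha'
      rcases hb' with rfl | rfl
      · rw [merge_merge_left]; rfl
      · exact absurd hcab hcm2
    · -- τ₂ = {B, C}
      have s2 : X₂ ⊆ ({ts} : Set _) := bc2 rfl
      rw [hu6]
      refine Qprop_ABC hAB hAC hBC ?_
      intro t ht
      rw [hJ] at ht
      obtain ⟨a, ha, b, hb, hcab, rfl⟩ := ht
      have ha' := s1 ha; have hb' := s2 hb
      simp only [Set.mem_singleton_iff] at ha' hb'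
      subst ha'; subst hb'
      rw [merge_merge_left']; rfl
    · -- τ₂ = {A, B, C}
      rw [Finset.union_self]
      refine Qprop_ABC hAB hAC hBC ?_
      intro t ht
      rw [hJ] at ht
      obtain ⟨a, ha, b, hb, hcab, rfl⟩ := ht
      have ha' := s1 ha; have hb' := abc2 rfl hb
      simp only [Set.mem_singleton_iff] at ha' hb'
      subst ha'; subst hb'
      rw [merge_self]; rfl
end
end SJAux

theorem semijoin_key {U : Type} (A B C : ℕ)
    (hAB : A ≠ B) (hAC : A ≠ C) (hBC : B ≠ C)
    (x y z u v : U) (hxyuv : (x, y) ≠ (u, v)) (hyv : y ≠ v)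
    (T : Fin 2 → Finset ℕ) (hTr : T 0 = {A, B}) (hTs : T 1 = {B, C})
    (t₁ t₂ ts : ℕ → Option U)
    (ht₁ : t₁ = fun n => if n = A then some x else if n = B then some y else none)
    (ht₂ : t₂ = fun n => if n = A then some u else if n = B then some v else none)
    (hts : ts = fun n => if n = B then some y else if n = C then some z else none)
    (D : Fin 2 → Set (ℕ → Option U)) (hDr : D 0 = {t₁, t₂}) (hDs : D 1 = {ts}) :
    ∀ e, BasicPE e → ∀ τ, HasType T e τ →
      SJAux.Qprop A B C t₁ t₂ ts τ (eval D e) := by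
  have hBA : B ≠ A := hAB.symm
  have ht₁A : t₁ A = some x := by rw [ht₁]; simp
  have ht₁B : t₁ B = some y := by rw [ht₁]; simp [hBA]
  have ht₂A : t₂ A = some u := by rw [ht₂]; simp
  have ht₂B : t₂ B = some v := by rw [ht₂]; simp [hBA]
  have htsB : ts B = some y := by rw [hts]; simp
  have hne : t₁ ≠ t₂ := by
    intro h; rw [h, ht₂B] at ht₁B; exact hyv (Option.some_inj.mp ht₁B).symm
  have hc12 : ¬ Compat t₁ t₂ := by
    intro h
    have h1 := h A x u ht₁A ht₂A
    have h2 := h B y v ht₁B ht₂B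
    exact hxyuv (by rw [h1, h2])
  have hc21 : ¬ Compat t₂ t₁ := by
    intro h
    have h1 := h A u x ht₂A ht₁A
    have h2 := h B v y ht₂B ht₁B
    exact hxyuv (by rw [h1, h2])
  have hc1s : Compat t₁ ts := by
    intro n a b h1 h2
    rw [ht₁] at h1; rw [hts] at h2
    dsimp only at h1 h2
    split_ifs at h1 h2 <;> simp_all
  have hcs1 : Compat ts t₁ := by
    intro n a b h1 h2
    rw [ht₁] at h2; rw [hts] at h1
    dsimp only at h1 h2
    split_ifs at h1 h2 <;> simp_all
  have hms1 : mergeTup ts t₁ = mergeTup t₁ ts := by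
    rw [ht₁, hts]
    funext n
    by_cases h1 : n = A <;> by_cases h2 : n = B <;> by_cases h3 : n = C <;>
      simp_all [mergeTup]
  have hc2s : ¬ Compat t₂ ts := by
    intro h; exact hyv (h B v y ht₂B htsB).symm
  have hcs2 : ¬ Compat ts t₂ := by
    intro h; exact hyv (h B y v htsB ht₂B)
  intro e hb
  induction hb with
  | rel r =>
    intro τ hτ
    cases hτ
    fin_cases r
    · have hq : SJAux.Qprop A B C t₁ t₂ ts (T 0) (D 0) := by
        rw [hTr, hDr]
        refine SJAux.Qprop_AB hAB hAC hBC (Set.Subset.refl _) ?_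
        exact iff_of_true (Set.mem_insert _ _) (Set.mem_insert_of_mem _ rfl)
      exact hq
    · have hq : SJAux.Qprop A B C t₁ t₂ ts (T 1) (D 1) := by
        rw [hTs, hDs]
        exact SJAux.Qprop_BC hAB hAC hBC (Set.Subset.refl _)
      exact hq
  | union h1 h2 ih1 ih2 =>
    intro τ hτ
    cases hτ with
    | union ha hb' =>
      simp only [eval]
      exact SJAux.Qprop_union hAB hAC hBC (ih1 _ ha) (ih2 _ hb')
  | diff h1 h2 ih1 ih2 =>
    intro τ hτ
    cases hτ with
    | diff ha hb' =>
      simp only [eval]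
      exact SJAux.Qprop_diff hAB hAC hBC (ih1 _ ha) (ih2 _ hb')
  | join h1 h2 ih1 ih2 =>
    intro τ hτ
    cases hτ with
    | join ha hb' =>
      exact SJAux.Qprop_join hAB hAC hBC hne hc12 hc21 hc1s hcs1 hms1 hc2s hcs2
        (ih1 _ ha) (ih2 _ hb') (fun t => Iff.rfl)
  | prod h1 h2 ih1 ih2 =>
    intro τ hτ
    cases hτ with
    | prod ha hb' hdisj =>
      exact SJAux.Qprop_join hAB hAC hBC hne hc12 hc21 hc1s hcs1 hms1 hc2s hcs2
        (ih1 _ ha) (ih2 _ hb') (fun t => Iff.rfl)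
  | projEmpty h ih =>
    intro τ hτ
    cases hτ with
    | proj ha hall =>
      have he : ([] : List ℕ).toFinset = (∅ : Finset ℕ) := rfl
      rw [he]
      refine SJAux.Qprop_empty hAB hAC hBC ?_
      intro t ht
      simp only [eval] at ht
      obtain ⟨w, hw, rfl⟩ := ht
      show _ = _
      funext n
      simp

/-- The semijoin `r ⋉ s` is not polymorphically expressible: for any expression
`e` over `{r, s}` built only from variables, ∪, −, ⋈, ×, π_∅, well-typed with
output type `{A, B}` under `T(r) = {A,B}`, `T(s) = {B,C}`, on the given database
the two tuples of `r` either both occur or both do not occur in the value of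
`e`; hence `e` does not compute the semijoin, whose value is `{[A:x, B:y]}`. -/
theorem semijoin_not_polymorphic {U : Type} (A B C : ℕ)
    (hAB : A ≠ B) (hAC : A ≠ C) (hBC : B ≠ C)
    (x y z u v : U) (hxyuv : (x, y) ≠ (u, v)) (hyv : y ≠ v)
    (e : RAExp (Fin 2)) (hb : BasicPE e)
    (T : Fin 2 → Finset ℕ) (hTr : T 0 = {A, B}) (hTs : T 1 = {B, C})
    (hty : HasType T e {A, B})
    (t₁ t₂ ts : ℕ → Option U)
    (ht₁ : t₁ = fun n => if n = A then some x else if n = B then some y else none)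
    (ht₂ : t₂ = fun n => if n = A then some u else if n = B then some v else none)
    (hts : ts = fun n => if n = B then some y else if n = C then some z else none)
    (D : Fin 2 → Set (ℕ → Option U)) (hDr : D 0 = {t₁, t₂}) (hDs : D 1 = {ts}) :
    (t₁ ∈ eval D e ↔ t₂ ∈ eval D e) ∧ eval D e ≠ {t₁} := by
  have hQ := semijoin_key A B C hAB hAC hBC x y z u v hxyuv hyv T hTr hTs
    t₁ t₂ ts ht₁ ht₂ hts D hDr hDs e hb {A, B} hty
  obtain ⟨-, -, hAB', -, -⟩ := hQ
  obtain ⟨hsub, hiff⟩ := hAB' rfl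
  have hBA : B ≠ A := hAB.symm
  have ht₁B : t₁ B = some y := by rw [ht₁]; simp [hBA]
  have ht₂B : t₂ B = some v := by rw [ht₂]; simp [hBA]
  have hne : t₁ ≠ t₂ := by
    intro h; rw [h, ht₂B] at ht₁B; exact hyv (Option.some_inj.mp ht₁B).symm
  refine ⟨hiff, ?_⟩
  intro h
  have h1 : t₁ ∈ eval D e := by rw [h]; rfl
  have h2 := hiff.1 h1
  rw [h] at h2
  exact hne (Set.mem_singleton_iff.mp h2).symm
end
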